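/- arXiv:1210.5590 — 4 statements merged into one kernel-verified Lean document; each statement's English description precedes it below -/
import Mathlib

section
/- Let B be a separable Banach space and let (B_n)_{n≥0} be a sequence of random nonempty compact convex subsets of B. Assume that almost surely the sequence (B_n) is relatively compact in the space K_B of nonempty compact subsets of B with the Hausdorff distance, and assume there exists a deterministic function φ : S*₁(0) → ℝ on the unit sphere of the dual space B* such that for every θ ∈ S*₁(0), the support functions satisfy M_{B_n}(θ) → φ(θ) almost surely as n → ∞. Then φ is the support function of a (deterministic) nonempty compact convex set A ⊂ B, and B_n → A almost surely in the Hausdorff distance. -/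
open MeasureTheory Filter Topology TopologicalSpace Metric


section Aux

variable {B : Type*} [NormedAddCommGroup B] [NormedSpace ℝ B]

lemma RCS.sSup_image_le_add {θ : B →L[ℝ] ℝ} (hθ : ‖θ‖ = 1) {K L : Set B}
    (hKc : IsCompact K) (hKne : K.Nonempty) (hLc : IsCompact L) (hLne : L.Nonempty) :
    sSup ((fun x => θ x) '' K) ≤ sSup ((fun x => θ x) '' L) + hausdorffDist K L := by
  apply csSup_le (hKne.image _)
  rintro _ ⟨x, hx, rfl⟩
  refine le_of_forall_pos_le_add fun ε hε => ?_
  have hfin : EMetric.hausdorffEdist K L ≠ ⊤ :=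
    hausdorffEdist_ne_top_of_nonempty_of_bounded hKne hLne hKc.isBounded hLc.isBounded
  obtain ⟨y, hy, hxy⟩ := exists_dist_lt_of_hausdorffDist_lt hx
    (lt_add_of_pos_right _ hε) hfin
  have h1 : θ x - θ y ≤ dist x y := by
    calc θ x - θ y = θ (x - y) := by rw [map_sub]
    _ ≤ ‖θ (x - y)‖ := le_abs_self _
    _ ≤ ‖θ‖ * ‖x - y‖ := θ.le_opNorm _
    _ = dist x y := by rw [hθ, one_mul, dist_eq_norm]
  have h2 : θ y ≤ sSup ((fun x => θ x) '' L) :=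
    le_csSup (hLc.image θ.continuous).bddAbove ⟨y, hy, rfl⟩
  linarith [hxy.le]

lemma RCS.abs_sSup_sub_le {θ : B →L[ℝ] ℝ} (hθ : ‖θ‖ = 1) (K L : NonemptyCompacts B) :
    |sSup ((fun x => θ x) '' (K : Set B)) - sSup ((fun x => θ x) '' (L : Set B))| ≤ dist K L := by
  rw [abs_sub_le_iff]
  have h1 := RCS.sSup_image_le_add hθ K.isCompact K.nonempty L.isCompact L.nonempty
  have h2 := RCS.sSup_image_le_add hθ L.isCompact L.nonempty K.isCompact K.nonempty
  rw [hausdorffDist_comm] at h2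
  rw [NonemptyCompacts.dist_eq]
  constructor <;> linarith

lemma RCS.tendsto_sSup_of_tendsto {θ : B →L[ℝ] ℝ} (hθ : ‖θ‖ = 1)
    {K : ℕ → NonemptyCompacts B} {L : NonemptyCompacts B} (h : Tendsto K atTop (𝓝 L)) :
    Tendsto (fun n => sSup ((fun x => θ x) '' (K n : Set B))) atTop
      (𝓝 (sSup ((fun x => θ x) '' (L : Set B)))) := by
  rw [tendsto_iff_dist_tendsto_zero]
  refine squeeze_zero (fun n => dist_nonneg) (fun n => ?_) (tendsto_iff_dist_tendsto_zero.1 h)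
  rw [Real.dist_eq]
  exact RCS.abs_sSup_sub_le hθ _ _

lemma RCS.convex_of_tendsto {K : ℕ → NonemptyCompacts B} {L : NonemptyCompacts B}
    (hc : ∀ n, Convex ℝ (K n : Set B)) (h : Tendsto K atTop (𝓝 L)) :
    Convex ℝ (L : Set B) := by
  intro x hx y hy a b ha hb hab
  have hcl : closure (L : Set B) = (L : Set B) := L.isCompact.isClosed.closure_eq
  rw [← hcl, Metric.mem_closure_iff]
  intro ε hε
  obtain ⟨N, hN⟩ := Metric.tendsto_atTop.1 h (ε/3) (by linarith)
  have hd : hausdorffDist (K N : Set B) (L : Set B) < ε/3 := by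
    have := hN N le_rfl
    rwa [NonemptyCompacts.dist_eq] at this
  have hfin : EMetric.hausdorffEdist (K N : Set B) (L : Set B) ≠ ⊤ :=
    hausdorffEdist_ne_top_of_nonempty_of_bounded (K N).nonempty L.nonempty
      (K N).isCompact.isBounded L.isCompact.isBounded
  have hfin' : EMetric.hausdorffEdist (L : Set B) (K N : Set B) ≠ ⊤ := by
    unfold EMetric.hausdorffEdist at hfin ⊢
    rwa [hausdorffEDist_comm] at hfin
  have hd' : hausdorffDist (L : Set B) (K N : Set B) < ε/3 := by
    rwa [hausdorffDist_comm] at hd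
  obtain ⟨x', hx', hxx'⟩ := exists_dist_lt_of_hausdorffDist_lt hx hd' hfin'
  obtain ⟨y', hy', hyy'⟩ := exists_dist_lt_of_hausdorffDist_lt hy hd' hfin'
  have hz' : a • x' + b • y' ∈ (K N : Set B) := hc N hx' hy' ha hb hab
  obtain ⟨z, hz, hzz⟩ := exists_dist_lt_of_hausdorffDist_lt hz' hd hfin
  refine ⟨z, hz, ?_⟩
  have hcomb : dist (a • x + b • y) (a • x' + b • y') ≤ a * dist x x' + b * dist y y' := by
    rw [dist_eq_norm]
    have : a • x + b • y - (a • x' + b • y') = a • (x - x') + b • (y - y') := by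
      rw [smul_sub, smul_sub]; abel
    rw [this]
    calc ‖a • (x - x') + b • (y - y')‖ ≤ ‖a • (x - x')‖ + ‖b • (y - y')‖ := norm_add_le _ _
    _ = a * ‖x - x'‖ + b * ‖y - y'‖ := by
        rw [norm_smul, norm_smul, Real.norm_of_nonneg ha, Real.norm_of_nonneg hb]
    _ = a * dist x x' + b * dist y y' := by rw [dist_eq_norm, dist_eq_norm]
  have h1 : a * dist x x' + b * dist y y' ≤ ε/3 := by
    have := add_le_add (mul_le_mul_of_nonneg_left hxx'.le ha)
      (mul_le_mul_of_nonneg_left hyy'.le hb)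
    calc a * dist x x' + b * dist y y' ≤ a * (ε/3) + b * (ε/3) := this
    _ = ε/3 := by rw [← add_mul, hab, one_mul]
  calc dist (a • x + b • y) z ≤ dist (a • x + b • y) (a • x' + b • y') + dist _ z :=
        dist_triangle _ _ _
  _ < ε/3 + ε/3 := by
      have := hcomb.trans h1
      exact add_lt_add_of_le_of_lt this hzz
  _ < ε := by linarith

lemma RCS.subset_of_forall_sSup_le {K L : Set B} (hL : Convex ℝ L) (hLc : IsCompact L)
    (hLne : L.Nonempty) (hKc : IsCompact K)
    (h : ∀ θ : B →L[ℝ] ℝ, ‖θ‖ = 1 →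
      sSup ((fun x => θ x) '' K) ≤ sSup ((fun x => θ x) '' L)) :
    K ⊆ L := by
  intro x hx
  by_contra hxL
  obtain ⟨f, u, hfu, hux⟩ := geometric_hahn_banach_closed_point hL hLc.isClosed hxL
  have hf0 : f ≠ 0 := by
    obtain ⟨y, hy⟩ := hLne
    intro h0
    rw [h0] at hfu hux
    simp only [ContinuousLinearMap.zero_apply] at hfu hux
    linarith [hfu y hy]
  have hfpos : (0:ℝ) < ‖f‖ := norm_pos_iff.2 hf0
  set θ : B →L[ℝ] ℝ := ‖f‖⁻¹ • f with hθdef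
  have hθ : ‖θ‖ = 1 := by
    have h1 : ‖θ‖ = ‖‖f‖⁻¹‖ * ‖f‖ := by rw [hθdef]; exact norm_smul _ f
    rw [h1, norm_inv, norm_norm, inv_mul_cancel₀ hfpos.ne']
  have hθapp : ∀ z, θ z = ‖f‖⁻¹ * f z := fun z => rfl
  have hsL : sSup ((fun x => θ x) '' L) ≤ ‖f‖⁻¹ * u := by
    apply csSup_le (hLne.image _)
    rintro _ ⟨z, hz, rfl⟩
    show θ z ≤ ‖f‖⁻¹ * u
    rw [hθapp z]
    exact mul_le_mul_of_nonneg_left (hfu z hz).le (inv_nonneg.2 hfpos.le)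
  have hsK : θ x ≤ sSup ((fun x => θ x) '' K) :=
    le_csSup (hKc.image θ.continuous).bddAbove ⟨x, hx, rfl⟩
  have hlt : ‖f‖⁻¹ * u < θ x := by
    rw [hθapp x]
    exact mul_lt_mul_of_pos_left hux (inv_pos.2 hfpos)
  have := hsK.trans ((h θ hθ).trans hsL)
  linarith

lemma RCS.sSup_image_le_of_ptwise {θ' θ : B →L[ℝ] ℝ} {K : Set B} (hKc : IsCompact K)
    (hKne : K.Nonempty) {δ : ℝ} (h : ∀ x ∈ K, θ' x ≤ θ x + δ) :
    sSup ((fun x => θ' x) '' K) ≤ sSup ((fun x => θ x) '' K) + δ := by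
  apply csSup_le (hKne.image _)
  rintro _ ⟨x, hx, rfl⟩
  exact (h x hx).trans
    (add_le_add_left (le_csSup (hKc.image θ.continuous).bddAbove ⟨x, hx, rfl⟩) δ)

lemma RCS.tendsto_sSup_of_ptwise {xs : ℕ → B} (hxs : DenseRange xs)
    {θk : ℕ → B →L[ℝ] ℝ} {θ : B →L[ℝ] ℝ} (hk : ∀ n, ‖θk n‖ = 1) (hθ : ‖θ‖ = 1)
    (hpt : ∀ i, Tendsto (fun n => θk n (xs i)) atTop (𝓝 (θ (xs i))))
    {K : Set B} (hKc : IsCompact K) (hKne : K.Nonempty) :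
    Tendsto (fun n => sSup ((fun x => θk n x) '' K)) atTop
      (𝓝 (sSup ((fun x => θ x) '' K))) := by
  rw [Metric.tendsto_nhds]
  intro ε hε
  have hcover : K ⊆ ⋃ i : ℕ, ball (xs i) (ε/8) := by
    intro x _
    obtain ⟨i, hi⟩ := hxs.exists_dist_lt x (by linarith : (0:ℝ) < ε/8)
    exact Set.mem_iUnion.2 ⟨i, mem_ball.2 hi⟩
  obtain ⟨t, ht⟩ := hKc.elim_finite_subcover (fun i => ball (xs i) (ε/8))
    (fun i => isOpen_ball) hcover
  have hev : ∀ᶠ n in atTop, ∀ i ∈ t, |θk n (xs i) - θ (xs i)| < ε/8 := by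
    rw [eventually_all_finset]
    intro i _
    have := Metric.tendsto_nhds.1 (hpt i) (ε/8) (by linarith)
    simpa [Real.dist_eq] using this
  filter_upwards [hev] with n hn
  have key : ∀ x ∈ K, |θk n x - θ x| ≤ 3 * (ε/8) := by
    intro x hxK
    obtain ⟨i, hit, hxi⟩ := Set.mem_iUnion₂.1 (ht hxK)
    have hdi : dist x (xs i) < ε/8 := mem_ball.1 hxi
    have e1 : |θk n x - θk n (xs i)| ≤ ε/8 := by
      calc |θk n x - θk n (xs i)| = |θk n (x - xs i)| := by rw [map_sub]
      _ ≤ ‖θk n‖ * ‖x - xs i‖ := (θk n).le_opNorm _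
      _ = dist x (xs i) := by rw [hk n, one_mul, dist_eq_norm]
      _ ≤ ε/8 := hdi.le
    have e2 : |θ (xs i) - θ x| ≤ ε/8 := by
      calc |θ (xs i) - θ x| = |θ (xs i - x)| := by rw [map_sub]
      _ ≤ ‖θ‖ * ‖xs i - x‖ := θ.le_opNorm _
      _ = dist x (xs i) := by rw [hθ, one_mul, dist_eq_norm, norm_sub_rev]
      _ ≤ ε/8 := hdi.le
    have e3 := hn i hit
    calc |θk n x - θ x|
        = |(θk n x - θk n (xs i)) + (θk n (xs i) - θ (xs i)) + (θ (xs i) - θ x)| := by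
          ring_nf
    _ ≤ |(θk n x - θk n (xs i)) + (θk n (xs i) - θ (xs i))| + |θ (xs i) - θ x| := abs_add_le _ _
    _ ≤ |θk n x - θk n (xs i)| + |θk n (xs i) - θ (xs i)| + |θ (xs i) - θ x| := by
          linarith [abs_add_le (θk n x - θk n (xs i)) (θk n (xs i) - θ (xs i))]
    _ ≤ 3 * (ε/8) := by linarith [e3.le]
  have hub1 : sSup ((fun x => θk n x) '' K) ≤ sSup ((fun x => θ x) '' K) + 3*(ε/8) :=
    RCS.sSup_image_le_of_ptwise hKc hKne fun x hxK => by
      linarith [abs_le.1 (key x hxK) |>.2]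
  have hub2 : sSup ((fun x => θ x) '' K) ≤ sSup ((fun x => θk n x) '' K) + 3*(ε/8) :=
    RCS.sSup_image_le_of_ptwise hKc hKne fun x hxK => by
      linarith [abs_le.1 (key x hxK) |>.1]
  rw [Real.dist_eq, abs_sub_lt_iff]
  constructor <;> linarith

end Aux

section D
variable {B : Type*} [NormedAddCommGroup B] [NormedSpace ℝ B]

lemma RCS.exists_countable_approx [SeparableSpace B] :
    ∃ (xs : ℕ → B) (D : Set (B →L[ℝ] ℝ)), DenseRange xs ∧ D.Countable ∧
      (∀ θ ∈ D, ‖θ‖ = 1) ∧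
      ∀ θ : B →L[ℝ] ℝ, ‖θ‖ = 1 → ∃ u : ℕ → (B →L[ℝ] ℝ), (∀ n, u n ∈ D) ∧
        ∀ i, Tendsto (fun n => u n (xs i)) atTop (𝓝 (θ (xs i))) := by
  classical
  obtain ⟨xs, hxs⟩ := TopologicalSpace.exists_dense_seq B
  set F : (B →L[ℝ] ℝ) → (ℕ → ℝ) := fun θ i => θ (xs i) with hF
  set S : Set (ℕ → ℝ) := F '' {θ : B →L[ℝ] ℝ | ‖θ‖ = 1} with hS
  obtain ⟨s, hsc, hsd⟩ := TopologicalSpace.exists_countable_dense (↥S)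
  have hgex : ∀ p : ↥S, ∃ θ : B →L[ℝ] ℝ, ‖θ‖ = 1 ∧ F θ = ↑p := by
    rintro ⟨q, ⟨θ, hθ, rfl⟩⟩
    exact ⟨θ, hθ, rfl⟩
  set g : ↥S → (B →L[ℝ] ℝ) := fun p => (hgex p).choose with hg
  have hgspec : ∀ p : ↥S, ‖g p‖ = 1 ∧ F (g p) = ↑p := fun p => (hgex p).choose_spec
  refine ⟨xs, g '' s, hxs, hsc.image g, ?_, ?_⟩
  · rintro _ ⟨p, _, rfl⟩
    exact (hgspec p).1
  · intro θ hθ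
    have hmem : (⟨F θ, ⟨θ, hθ, rfl⟩⟩ : ↥S) ∈ closure s := hsd.closure_eq ▸ Set.mem_univ _
    obtain ⟨u, hu, hul⟩ := mem_closure_iff_seq_limit.1 hmem
    refine ⟨fun n => g (u n), fun n => ⟨u n, hu n, rfl⟩, fun i => ?_⟩
    have h1 : Tendsto (fun n => (u n : ℕ → ℝ)) atTop (𝓝 (F θ)) :=
      (continuous_subtype_val.tendsto _).comp hul
    have h2 := tendsto_pi_nhds.1 h1 i
    have h3 : ∀ n, g (u n) (xs i) = (u n : ℕ → ℝ) i := by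
      intro n
      have := (hgspec (u n)).2
      calc g (u n) (xs i) = F (g (u n)) i := rfl
      _ = (u n : ℕ → ℝ) i := by rw [this]
    simpa [h3] using h2

lemma RCS.eq_of_sSup_eq_on {xs : ℕ → B} (hxs : DenseRange xs) {D : Set (B →L[ℝ] ℝ)}
    (hD1 : ∀ θ ∈ D, ‖θ‖ = 1)
    (happrox : ∀ θ : B →L[ℝ] ℝ, ‖θ‖ = 1 → ∃ u : ℕ → (B →L[ℝ] ℝ), (∀ n, u n ∈ D) ∧
        ∀ i, Tendsto (fun n => u n (xs i)) atTop (𝓝 (θ (xs i))))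
    {K L : Set B} (hKc : IsCompact K) (hKne : K.Nonempty) (hKconv : Convex ℝ K)
    (hLc : IsCompact L) (hLne : L.Nonempty) (hLconv : Convex ℝ L)
    (h : ∀ θ ∈ D, sSup ((fun x => θ x) '' K) = sSup ((fun x => θ x) '' L)) :
    K = L := by
  have hall : ∀ θ : B →L[ℝ] ℝ, ‖θ‖ = 1 →
      sSup ((fun x => θ x) '' K) = sSup ((fun x => θ x) '' L) := by
    intro θ hθ
    obtain ⟨u, hu, hpt⟩ := happrox θ hθ
    have t1 := RCS.tendsto_sSup_of_ptwise hxs (fun n => hD1 _ (hu n)) hθ hpt hKc hKne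
    have t2 := RCS.tendsto_sSup_of_ptwise hxs (fun n => hD1 _ (hu n)) hθ hpt hLc hLne
    have heq : (fun n => sSup ((fun x => u n x) '' K))
        = fun n => sSup ((fun x => u n x) '' L) := by
      funext n; exact h (u n) (hu n)
    rw [heq] at t1
    exact tendsto_nhds_unique t1 t2
  apply Set.Subset.antisymm
  · exact RCS.subset_of_forall_sSup_le hLconv hLc hLne hKc fun θ hθ => (hall θ hθ).le
  · exact RCS.subset_of_forall_sSup_le hKconv hKc hKne hLc fun θ hθ => (hall θ hθ).ge

end D

/-- **Lemma 8.** Let `(B_n)` be a sequence of random nonempty compact convex subsets of a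
separable Banach space `B` which is almost surely relatively compact in the space `K_B` of
nonempty compact subsets of `B` with the Hausdorff distance, and suppose there is a
deterministic function `φ` on the unit sphere of the dual such that the support functions
satisfy `M_{B_n}(θ) → φ(θ)` a.s. for every `θ`.  Then `φ` is the support function of a
deterministic nonempty compact convex set `A` and `B_n → A` a.s. in the Hausdorff distance. -/
theorem random_convex_sets_tendsto_of_support_functions
    {B : Type*} [NormedAddCommGroup B] [NormedSpace ℝ B] [CompleteSpace B]
    [TopologicalSpace.SeparableSpace B]
    {Ω : Type*} [MeasurableSpace Ω] (Pr : Measure Ω) [IsProbabilityMeasure Pr]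
    (Bn : ℕ → Ω → Set B)
    (hBcompact : ∀ n ω, IsCompact (Bn n ω))
    (hBne : ∀ n ω, (Bn n ω).Nonempty)
    (hBconv : ∀ n ω, Convex ℝ (Bn n ω))
    -- almost sure relative compactness in `K_B`
    (hrelcpt : ∀ᵐ ω ∂Pr, ∃ K : ℕ → NonemptyCompacts B,
      (∀ n, (K n : Set B) = Bn n ω) ∧ IsCompact (closure (Set.range K)))
    -- support functions converge a.s. to a deterministic function `φ` on the dual sphere
    (φ : (B →L[ℝ] ℝ) → ℝ)
    (hconv : ∀ θ : B →L[ℝ] ℝ, ‖θ‖ = 1 →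
      ∀ᵐ ω ∂Pr, Tendsto (fun n => sSup ((fun x => θ x) '' (Bn n ω))) atTop (𝓝 (φ θ))) :
    ∃ A : Set B, A.Nonempty ∧ IsCompact A ∧ Convex ℝ A ∧
      (∀ θ : B →L[ℝ] ℝ, ‖θ‖ = 1 → sSup ((fun x => θ x) '' A) = φ θ) ∧
      ∀ᵐ ω ∂Pr, Tendsto (fun n => hausdorffDist (Bn n ω) A) atTop (𝓝 0) := by
  classical
  obtain ⟨xs, D, hxs, hDc, hD1, hDapprox⟩ := RCS.exists_countable_approx (B := B)
  -- the full-measure event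
  have hae : ∀ᵐ ω ∂Pr, (∃ K : ℕ → NonemptyCompacts B,
      (∀ n, (K n : Set B) = Bn n ω) ∧ IsCompact (closure (Set.range K))) ∧
      ∀ θ ∈ D, Tendsto (fun n => sSup ((fun x => θ x) '' (Bn n ω))) atTop (𝓝 (φ θ)) := by
    refine hrelcpt.and ?_
    rw [ae_ball_iff hDc]
    intro θ hθ
    exact hconv θ (hD1 θ hθ)
  -- cluster point lemma
  have cluster : ∀ ω : Ω,
      (∀ θ ∈ D, Tendsto (fun n => sSup ((fun x => θ x) '' (Bn n ω))) atTop (𝓝 (φ θ))) →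
      ∀ K : ℕ → NonemptyCompacts B, (∀ n, (K n : Set B) = Bn n ω) →
      ∀ σ : ℕ → ℕ, Tendsto σ atTop atTop →
      ∀ L : NonemptyCompacts B, Tendsto (K ∘ σ) atTop (𝓝 L) →
      Convex ℝ (L : Set B) ∧ ∀ θ ∈ D, sSup ((fun x => θ x) '' (L : Set B)) = φ θ := by
    intro ω hω K hK σ hσ L hL
    constructor
    · refine RCS.convex_of_tendsto (fun j => ?_) hL
      show Convex ℝ ((K ∘ σ) j : Set B)
      rw [Function.comp_apply, hK]
      exact hBconv _ ω
    · intro θ hθ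
      have h1 := RCS.tendsto_sSup_of_tendsto (hD1 θ hθ) hL
      have h2 : Tendsto (fun j => sSup ((fun x => θ x) '' ((K ∘ σ) j : Set B)))
          atTop (𝓝 (φ θ)) := by
        have h3 := (hω θ hθ).comp hσ
        have h4 : (fun j => sSup ((fun x => θ x) '' ((K ∘ σ) j : Set B)))
            = (fun n => sSup ((fun x => θ x) '' (Bn n ω))) ∘ σ := by
          funext j
          rw [Function.comp_apply, Function.comp_apply, hK]
        rw [h4]
        exact h3
      exact tendsto_nhds_unique h1 h2
  -- choose a good ω₀ and a subsequential limit L₀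
  obtain ⟨ω₀, hω₀⟩ := hae.exists
  obtain ⟨K0, hK0, hK0c⟩ := hω₀.1
  obtain ⟨L₀, _, σ₀, hσ₀, hσ₀lim⟩ :=
    hK0c.tendsto_subseq (fun n => subset_closure (Set.mem_range_self n))
  obtain ⟨hL₀conv, hL₀supp⟩ := cluster ω₀ hω₀.2 K0 hK0 σ₀ hσ₀.tendsto_atTop L₀ hσ₀lim
  -- uniqueness of cluster points
  have uniq : ∀ L : NonemptyCompacts B, Convex ℝ (L : Set B) →
      (∀ θ ∈ D, sSup ((fun x => θ x) '' (L : Set B)) = φ θ) → L = L₀ := by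
    intro L hLconv hLsupp
    have : (L : Set B) = (L₀ : Set B) := by
      refine RCS.eq_of_sSup_eq_on hxs hD1 hDapprox L.isCompact L.nonempty hLconv
        L₀.isCompact L₀.nonempty hL₀conv ?_
      intro θ hθ
      rw [hLsupp θ hθ, hL₀supp θ hθ]
    exact NonemptyCompacts.ext this
  -- full-sequence convergence at good ω
  have conv : ∀ ω : Ω,
      (∀ θ ∈ D, Tendsto (fun n => sSup ((fun x => θ x) '' (Bn n ω))) atTop (𝓝 (φ θ))) →
      ∀ K : ℕ → NonemptyCompacts B, (∀ n, (K n : Set B) = Bn n ω) →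
      IsCompact (closure (Set.range K)) → Tendsto K atTop (𝓝 L₀) := by
    intro ω hω K hK hcl
    apply tendsto_of_subseq_tendsto
    intro ns hns
    obtain ⟨L, _, ms, hms, hmslim⟩ :=
      hcl.tendsto_subseq (x := fun n => K (ns n))
        (fun n => subset_closure (Set.mem_range_self (ns n)))
    have hmslim' : Tendsto (K ∘ (ns ∘ ms)) atTop (𝓝 L) := hmslim
    obtain ⟨hLconv, hLsupp⟩ :=
      cluster ω hω K hK (ns ∘ ms) (hns.comp hms.tendsto_atTop) L hmslim'
    refine ⟨ms, ?_⟩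
    rw [show L = L₀ from uniq L hLconv hLsupp] at hmslim
    exact hmslim
  refine ⟨(L₀ : Set B), L₀.nonempty, L₀.isCompact, hL₀conv, ?_, ?_⟩
  · -- support function identity for all unit θ
    intro θ hθ
    obtain ⟨ω₁, hω₁, hω₁θ⟩ := (hae.and (hconv θ hθ)).exists
    obtain ⟨K, hK, hcl⟩ := hω₁.1
    have ht := conv ω₁ hω₁.2 K hK hcl
    have h1 := RCS.tendsto_sSup_of_tendsto hθ ht
    have h2 : (fun n => sSup ((fun x => θ x) '' (K n : Set B)))
        = fun n => sSup ((fun x => θ x) '' (Bn n ω₁)) := by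
      funext n; rw [hK]
    rw [h2] at h1
    exact tendsto_nhds_unique h1 hω₁θ
  · -- a.s. Hausdorff convergence
    filter_upwards [hae] with ω hω
    obtain ⟨K, hK, hcl⟩ := hω.1
    have ht := conv ω hω.2 K hK hcl
    have := tendsto_iff_dist_tendsto_zero.1 ht
    have heq : (fun n => dist (K n) L₀) = fun n => hausdorffDist (Bn n ω) (L₀ : Set B) := by
      funext n
      rw [NonemptyCompacts.dist_eq, hK]
    rwa [heq] at this
end

section
/- Let (Y_n)_{n≥1} be a sequence of identically distributed real random variables (not necessarily independent) such that for some ζ > 0, E[exp(γ Y_1²)] < ∞ for all γ < 1/(2ζ²). Let Z_n = (2 ln n)^{-1/2} max{Y_1, …, Y_n}. Then limsup_{n→∞} Z_n ≤ ζ almost surely, and for every a > 0, limsup_{n→∞} E[exp(a Z_n²)] < ∞. -/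
open MeasureTheory Filter Topology ENNReal

lemma aux_ciSup_subtype_eq_sup' (s : Finset ℕ) (H : s.Nonempty) (f : ℕ → ℝ) :
    (⨆ k : s, f k) = s.sup' H f := by
  haveI : Nonempty s := H.to_subtype
  rw [Finset.sup'_eq_csSup_image s H f, iSup]
  congr 1
  ext x
  constructor
  · rintro ⟨⟨i, hi⟩, rfl⟩; exact ⟨i, hi, rfl⟩
  · rintro ⟨i, hi, rfl⟩; exact ⟨⟨i, hi⟩, rfl⟩

set_option maxHeartbeats 2000000 in
/-- **Lemma 9.** Let `(Y_n)_{n≥1}` be identically distributed real random variables (no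
independence assumed) such that `E[exp(γ Y₁²)] < ∞` for all `γ < 1/(2ζ²)`, for some
`ζ > 0`.  With `Z_n = (2 ln n)^{-1/2} max{Y₁,…,Y_n}` one has `limsup_n Z_n ≤ ζ` a.s., and
`limsup_n E[exp(a Z_n²)] < ∞` for every `a > 0`. -/
theorem limsup_max_subGaussian
    {Ω : Type*} [MeasurableSpace Ω] (Pr : Measure Ω) [IsProbabilityMeasure Pr]
    (Y : ℕ → Ω → ℝ) (hmeas : ∀ n, Measurable (Y n))
    -- identically distributed
    (hid : ∀ n, 1 ≤ n → Measure.map (Y n) Pr = Measure.map (Y 1) Pr)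
    (ζ : ℝ) (hζ : 0 < ζ)
    -- Gaussian-type exponential moments
    (hmom : ∀ γ : ℝ, γ < 1 / (2 * ζ ^ 2) →
      ∫⁻ ω, ENNReal.ofReal (Real.exp (γ * (Y 1 ω) ^ 2)) ∂Pr < ⊤)
    (Z : ℕ → Ω → ℝ)
    (hZ : ∀ n ω, Z n ω = (Real.sqrt (2 * Real.log n))⁻¹ * ⨆ k : (Finset.Icc 1 n), Y k ω) :
    (∀ᵐ ω ∂Pr, Filter.limsup (fun n => Z n ω) atTop ≤ ζ) ∧
    ∀ a : ℝ, 0 < a →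
      Filter.limsup (fun n => ∫⁻ ω, ENNReal.ofReal (Real.exp (a * (Z n ω) ^ 2)) ∂Pr)
        atTop < ⊤ := by
  -- notation
  set M : ℕ → Ω → ℝ := fun n ω => ⨆ k : (Finset.Icc 1 n), Y k ω with hM
  set c : ℕ → ℝ := fun n => Real.sqrt (2 * Real.log n) with hc
  have hZ' : ∀ n ω, Z n ω = (c n)⁻¹ * M n ω := hZ
  set C : ℝ → ℝ≥0∞ := fun γ => ∫⁻ ω, ENNReal.ofReal (Real.exp (γ * (Y 1 ω) ^ 2)) ∂Pr with hC
  have hgmeas : ∀ b : ℝ, Measurable fun y : ℝ => ENNReal.ofReal (Real.exp (b * y ^ 2)) := by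
    intro b
    exact (Real.measurable_exp.comp (measurable_const.mul (measurable_id.pow_const 2))).ennreal_ofReal
  -- basic facts about c
  have hlog2 : (0.6931471803 : ℝ) < Real.log 2 := Real.log_two_gt_d9
  have hc1 : ∀ n : ℕ, 2 ≤ n → 1 ≤ c n := by
    intro n hn
    have h2 : Real.log 2 ≤ Real.log n := by
      apply Real.log_le_log (by norm_num)
      exact_mod_cast hn
    apply Real.one_le_sqrt.mpr
    nlinarith
  have hcpos : ∀ n : ℕ, 2 ≤ n → 0 < c n := fun n hn => lt_of_lt_of_le one_pos (hc1 n hn)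
  have hlogpos : ∀ n : ℕ, 2 ≤ n → 0 < Real.log n := by
    intro n hn
    apply Real.log_pos
    exact_mod_cast hn
  have hcmono : ∀ m n : ℕ, m ≤ n → c m ≤ c n := by
    intro m n hmn
    apply Real.sqrt_le_sqrt
    have : Real.log m ≤ Real.log n := by
      rcases Nat.eq_zero_or_pos m with rfl | hm
      · simp
        rcases Nat.eq_zero_or_pos n with rfl | hn0
        · simp
        · exact Real.log_natCast_nonneg n
      · apply Real.log_le_log (by exact_mod_cast hm)
        exact_mod_cast hmn
    linarith
  have hcsq : ∀ n : ℕ, 2 ≤ n → (c n) ^ 2 = 2 * Real.log n := by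
    intro n hn
    exact Real.sq_sqrt (by have := hlogpos n hn; linarith)
  -- basic facts about M
  have hne : ∀ n : ℕ, 1 ≤ n → (Finset.Icc 1 n).Nonempty := fun n hn =>
    Finset.nonempty_Icc.mpr hn
  have hMsup' : ∀ n (hn : 1 ≤ n) ω, M n ω = (Finset.Icc 1 n).sup' (hne n hn) (fun j => Y j ω) := by
    intro n hn ω
    show (⨆ k : (Finset.Icc 1 n), Y k ω) = _
    exact aux_ciSup_subtype_eq_sup' (Finset.Icc 1 n) (hne n hn) (fun j => Y j ω)
  have hMle : ∀ n (hn : 1 ≤ n) ω t, (∀ j ∈ Finset.Icc 1 n, Y j ω ≤ t) → M n ω ≤ t := by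
    intro n hn ω t h
    rw [hMsup' n hn ω]
    exact Finset.sup'_le _ _ h
  have hMattain : ∀ n (hn : 1 ≤ n) ω, ∃ j ∈ Finset.Icc 1 n, M n ω = Y j ω := by
    intro n hn ω
    obtain ⟨j, hj, h⟩ := Finset.exists_mem_eq_sup' (hne n hn) (fun j => Y j ω)
    exact ⟨j, hj, by rw [hMsup' n hn ω, h]⟩
  have hMmono : ∀ (m n : ℕ), 1 ≤ m → m ≤ n → ∀ ω, M m ω ≤ M n ω := by
    intro m n hm hmn ω
    apply hMle m hm ω
    intro j hj
    rw [hMsup' n (hm.trans hmn) ω]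
    exact Finset.le_sup' (fun j => Y j ω) (by rw [Finset.mem_Icc] at hj ⊢; omega)
  -- transfer of lintegrals by identical distribution
  have htrans : ∀ (g : ℝ → ℝ≥0∞), Measurable g → ∀ n, 1 ≤ n →
      ∫⁻ ω, g (Y n ω) ∂Pr = ∫⁻ ω, g (Y 1 ω) ∂Pr := by
    intro g hg n hn
    rw [← lintegral_map hg (hmeas n), ← lintegral_map hg (hmeas 1), hid n hn]
  -- tail bound
  have htail : ∀ γ t : ℝ, 0 ≤ γ → 0 ≤ t → ∀ j, 1 ≤ j →
      Pr {ω | t < Y j ω} ≤ ENNReal.ofReal (Real.exp (-(γ * t ^ 2))) * C γ := by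
    intro γ t hγ ht j hj
    set ε := ENNReal.ofReal (Real.exp (γ * t ^ 2)) with hε
    have hε0 : ε ≠ 0 := by
      simp [hε, ENNReal.ofReal_eq_zero, not_le, Real.exp_pos]
    have hεtop : ε ≠ ⊤ := ENNReal.ofReal_ne_top
    have hsub : {ω | t < Y j ω} ⊆
        {ω | ε ≤ ENNReal.ofReal (Real.exp (γ * (Y j ω) ^ 2))} := by
      intro ω hω
      simp only [Set.mem_setOf_eq] at hω ⊢
      apply ENNReal.ofReal_le_ofReal
      apply Real.exp_le_exp.mpr
      apply mul_le_mul_of_nonneg_left _ hγ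
      nlinarith
    have h1 : ε * Pr {ω | t < Y j ω} ≤ C γ := by
      calc ε * Pr {ω | t < Y j ω}
          ≤ ε * Pr {ω | ε ≤ ENNReal.ofReal (Real.exp (γ * (Y j ω) ^ 2))} :=
            mul_le_mul_right (measure_mono hsub) ε
        _ ≤ ∫⁻ ω, ENNReal.ofReal (Real.exp (γ * (Y j ω) ^ 2)) ∂Pr :=
            mul_meas_ge_le_lintegral ((hgmeas γ).comp (hmeas j)) ε
        _ = C γ := htrans _ (hgmeas γ) j hj
    have h2 : ε⁻¹ = ENNReal.ofReal (Real.exp (-(γ * t ^ 2))) := by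
      rw [hε, ← ENNReal.ofReal_inv_of_pos (Real.exp_pos _), ← Real.exp_neg]
    calc Pr {ω | t < Y j ω} = ε⁻¹ * (ε * Pr {ω | t < Y j ω}) := by
          rw [← mul_assoc, ENNReal.inv_mul_cancel hε0 hεtop, one_mul]
      _ ≤ ε⁻¹ * C γ := mul_le_mul_right h1 _
      _ = ENNReal.ofReal (Real.exp (-(γ * t ^ 2))) * C γ := by rw [h2]
  -- Part 1
  have key : ∀ lam : ℝ, ζ < lam → ∀ᵐ ω ∂Pr, Filter.limsup (fun n => Z n ω) atTop ≤ lam := by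
    intro lam hlam
    have hlam0 : 0 < lam := hζ.trans hlam
    set γ : ℝ := (1 / (2 * lam ^ 2) + 1 / (2 * ζ ^ 2)) / 2 with hγ
    have hsq : ζ ^ 2 < lam ^ 2 := by nlinarith
    have hγpos : 0 < γ := by positivity
    have hγlt : γ < 1 / (2 * ζ ^ 2) := by
      have h1 : 1 / (2 * lam ^ 2) < 1 / (2 * ζ ^ 2) := by
        apply one_div_lt_one_div_of_lt (by positivity)
        nlinarith
      rw [hγ]; linarith
    have hβ : 1 < 2 * γ * lam ^ 2 := by
      have h1 : 1 / (2 * lam ^ 2) < 1 / (2 * ζ ^ 2) := by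
        apply one_div_lt_one_div_of_lt (by positivity)
        nlinarith
      have h2 : (1 / (2 * lam ^ 2)) * (2 * lam ^ 2) = 1 := by
        field_simp
      nlinarith [sq_nonneg lam]
    set r : ℝ := Real.exp (Real.log 2 * (1 - 2 * γ * lam ^ 2)) with hr
    have hr0 : 0 < r := Real.exp_pos _
    have hr1 : r < 1 := by
      rw [hr]
      apply Real.exp_lt_one_iff.mpr
      apply mul_neg_of_pos_of_neg (by linarith)
      linarith
    set A : ℕ → Set Ω := fun k => {ω | lam * c (2 ^ k) < M (2 ^ (k + 1)) ω} with hA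
    have hPA : ∀ k, Pr (A k) ≤ ENNReal.ofReal (2 * r ^ k) * C γ := by
      intro k
      have hL0 : 0 ≤ lam * c (2 ^ k) := mul_nonneg hlam0.le (Real.sqrt_nonneg _)
      have hsub : A k ⊆ ⋃ j ∈ Finset.Icc 1 (2 ^ (k + 1)), {ω | lam * c (2 ^ k) < Y j ω} := by
        intro ω hω
        by_contra h
        simp only [Set.mem_iUnion, Set.mem_setOf_eq, not_exists, not_lt] at h
        exact absurd (hMle (2 ^ (k + 1)) (Nat.one_le_two_pow) ω _ h) (not_le.mpr hω)
      have hexp : ∀ j ∈ Finset.Icc 1 (2 ^ (k + 1)),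
          Pr {ω | lam * c (2 ^ k) < Y j ω} ≤
            ENNReal.ofReal (Real.exp (-(γ * (lam * c (2 ^ k)) ^ 2))) * C γ := by
        intro j hj
        exact htail γ _ hγpos.le hL0 j (Finset.mem_Icc.mp hj).1
      have hcard : (Finset.Icc 1 (2 ^ (k + 1))).card = 2 ^ (k + 1) := by
        rw [Nat.card_Icc]; simp
      -- the key real computation
      have hrcomp : ((2 ^ (k + 1) : ℕ) : ℝ) * Real.exp (-(γ * (lam * c (2 ^ k)) ^ 2))
          = 2 * r ^ k := by
        have hlogk : Real.log ((2 ^ k : ℕ) : ℝ) = k * Real.log 2 := by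
          push_cast
          rw [Real.log_pow]
        have hck : (c (2 ^ k)) ^ 2 = 2 * (k * Real.log 2) := by
          rw [hc]
          rw [Real.sq_sqrt]
          · rw [hlogk]
          · rw [hlogk]; positivity
        have h2e : (2 : ℝ) = Real.exp (Real.log 2) := (Real.exp_log (by norm_num)).symm
        have hpk : ((2 ^ (k + 1) : ℕ) : ℝ) = 2 * Real.exp (k * Real.log 2) := by
          push_cast
          rw [pow_succ, mul_comm ((2:ℝ)^k) 2]
          congr 1
          rw [Real.exp_nat_mul, ← h2e]
        have hrk : r ^ k = Real.exp (k * (Real.log 2 * (1 - 2 * γ * lam ^ 2))) := by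
          rw [hr, ← Real.exp_nat_mul]
        rw [hpk, hrk, mul_assoc, ← Real.exp_add]
        congr 1
        rw [mul_pow, hck]
        ring
      calc Pr (A k) ≤ Pr (⋃ j ∈ Finset.Icc 1 (2 ^ (k + 1)), {ω | lam * c (2 ^ k) < Y j ω}) :=
            measure_mono hsub
        _ ≤ ∑ j ∈ Finset.Icc 1 (2 ^ (k + 1)), Pr {ω | lam * c (2 ^ k) < Y j ω} :=
            measure_biUnion_finset_le _ _
        _ ≤ ∑ j ∈ Finset.Icc 1 (2 ^ (k + 1)),
              ENNReal.ofReal (Real.exp (-(γ * (lam * c (2 ^ k)) ^ 2))) * C γ :=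
            Finset.sum_le_sum hexp
        _ = ((2 ^ (k + 1) : ℕ) : ℝ≥0∞) *
              (ENNReal.ofReal (Real.exp (-(γ * (lam * c (2 ^ k)) ^ 2))) * C γ) := by
            rw [Finset.sum_const, hcard, nsmul_eq_mul]
        _ = (((2 ^ (k + 1) : ℕ) : ℝ≥0∞) *
              ENNReal.ofReal (Real.exp (-(γ * (lam * c (2 ^ k)) ^ 2)))) * C γ := by
            rw [mul_assoc]
        _ = ENNReal.ofReal (2 * r ^ k) * C γ := by
            congr 1
            rw [← ENNReal.ofReal_natCast, ← ENNReal.ofReal_mul (by positivity), hrcomp]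
    have hCne : C γ ≠ ⊤ := (hmom γ hγlt).ne
    have hsum : ∑' k, Pr (A k) ≠ ⊤ := by
      apply ne_top_of_le_ne_top _ (ENNReal.tsum_le_tsum hPA)
      rw [ENNReal.tsum_mul_right]
      apply ENNReal.mul_ne_top _ hCne
      rw [← ENNReal.ofReal_tsum_of_nonneg (fun k => by positivity)
        ((summable_geometric_of_lt_one hr0.le hr1).mul_left 2)]
      exact ENNReal.ofReal_ne_top
    have hBC := MeasureTheory.ae_eventually_notMem hsum
    filter_upwards [hBC] with ω hω
    obtain ⟨K, hK⟩ := eventually_atTop.mp hω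
    have hev : ∀ᶠ n in atTop, Z n ω ≤ lam := by
      rw [eventually_atTop]
      refine ⟨2 ^ (K + 1), fun n hn => ?_⟩
      have hn2 : 2 ≤ n := le_trans (by have := Nat.one_lt_two_pow_iff (n := K + 1); omega) hn
      set k := Nat.log 2 n with hk
      have hk1 : 2 ^ k ≤ n := Nat.pow_log_le_self 2 (by omega)
      have hk2 : n < 2 ^ (k + 1) := Nat.lt_pow_succ_log_self (by norm_num) n
      have hkK : K + 1 ≤ k := by
        have := Nat.log_mono_right (b := 2) hn
        rwa [Nat.log_pow (by norm_num)] at this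
      have h2k : 2 ≤ 2 ^ k := by
        have : 2 ^ 1 ≤ 2 ^ k := Nat.pow_le_pow_right (by norm_num) (by omega)
        simpa using this
      have hMb : M (2 ^ (k + 1)) ω ≤ lam * c (2 ^ k) := not_lt.mp (hK k (by omega))
      have hMn : M n ω ≤ lam * c n := by
        calc M n ω ≤ M (2 ^ (k + 1)) ω := hMmono n _ (by omega) hk2.le ω
          _ ≤ lam * c (2 ^ k) := hMb
          _ ≤ lam * c n := mul_le_mul_of_nonneg_left (hcmono _ _ hk1) hlam0.le
      rw [hZ' n ω]
      rw [inv_mul_le_iff₀ (hcpos n hn2)]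
      linarith [hMn]
    have hlb : ∀ᶠ n in atTop, min (Y 1 ω) 0 ≤ Z n ω := by
      rw [eventually_atTop]
      refine ⟨2, fun n hn => ?_⟩
      have h1M : Y 1 ω ≤ M n ω := by
        rw [hMsup' n (by omega) ω]
        exact Finset.le_sup' (fun j => Y j ω) (Finset.mem_Icc.mpr ⟨le_refl 1, by omega⟩)
      rw [hZ' n ω]
      have hc' := hcpos n hn
      have hc1' := hc1 n hn
      rcases le_or_gt 0 (M n ω) with h | h
      · exact le_trans (min_le_right _ _) (mul_nonneg (inv_nonneg.mpr hc'.le) h)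
      · have hinvpos : 0 < (c n)⁻¹ := inv_pos.mpr hc'
        have hcancel : c n * (c n)⁻¹ = 1 := mul_inv_cancel₀ hc'.ne'
        have hinv1 : (c n)⁻¹ ≤ 1 := by nlinarith
        have : M n ω ≤ (c n)⁻¹ * M n ω := by nlinarith
        exact le_trans (min_le_left _ _) (le_trans h1M this)
    exact Filter.limsup_le_of_le (IsBoundedUnder.isCoboundedUnder_le ⟨min (Y 1 ω) 0, hlb⟩) hev
  have part1 : ∀ᵐ ω ∂Pr, Filter.limsup (fun n => Z n ω) atTop ≤ ζ := by
    have hae := ae_all_iff.mpr fun j : ℕ => key (ζ * (1 + 1 / (j + 1)))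
      (by
        have h0 : 0 < 1 / ((j : ℝ) + 1) := by positivity
        nlinarith)
    filter_upwards [hae] with ω hω
    have htend : Tendsto (fun j : ℕ => ζ * (1 + 1 / ((j : ℝ) + 1))) atTop (𝓝 ζ) := by
      have h1 : Tendsto (fun j : ℕ => 1 / ((j : ℝ) + 1)) atTop (𝓝 0) :=
        tendsto_one_div_add_atTop_nhds_zero_nat
      have := ((tendsto_const_nhds (x := (1 : ℝ)) (f := atTop)).add h1).const_mul ζ
      simpa using this
    exact ge_of_tendsto' htend hω
  refine ⟨part1, ?_⟩
  -- Part 2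
  intro a ha
  set γ2 : ℝ := 1 / (4 * ζ ^ 2) with hγ2
  have hγ2pos : 0 < γ2 := by positivity
  have hγ2lt : γ2 < 1 / (2 * ζ ^ 2) := by
    rw [hγ2]
    apply one_div_lt_one_div_of_lt (by positivity)
    nlinarith
  set d : ℝ := 2 / γ2 with hd
  have hdpos : 0 < d := by positivity
  have hγd : γ2 * d = 2 := by
    rw [hd]
    field_simp
  set gn : ℕ → ℝ := fun n => a / (2 * Real.log n) with hgn
  set g : ℕ → ℝ → ℝ≥0∞ := fun n y =>
    if 2 * d * Real.log n ≤ y ^ 2 then ENNReal.ofReal (Real.exp (gn n * y ^ 2)) else 0 with hg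
  have hgm : ∀ n, Measurable (g n) := by
    intro n
    apply Measurable.ite _ (hgmeas (gn n)) measurable_const
    exact measurableSet_le measurable_const (measurable_id.pow_const 2)
  obtain ⟨N0, hN0⟩ := exists_nat_ge (Real.exp (a / γ2))
  set N := max N0 2 with hN
  have key2 : ∀ n : ℕ, N ≤ n → (∫⁻ ω, ENNReal.ofReal (Real.exp (a * (Z n ω) ^ 2)) ∂Pr)
      ≤ ENNReal.ofReal (Real.exp (a * d)) + C γ2 := by
    intro n hn
    have hn2 : 2 ≤ n := le_trans (le_max_right _ _) hn
    have hn0 : 0 < (n : ℝ) := by exact_mod_cast (by omega : 0 < n)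
    have hlogn := hlogpos n hn2
    have hgnpos : 0 < gn n := by rw [hgn]; positivity
    have hgnle : gn n ≤ γ2 / 2 := by
      have hle : Real.exp (a / γ2) ≤ (n : ℝ) := by
        refine le_trans hN0 ?_
        exact_mod_cast le_trans (le_max_left _ _) hn
      have hlog : a / γ2 ≤ Real.log n := by
        rw [← Real.log_exp (a / γ2)]
        exact Real.log_le_log (Real.exp_pos _) hle
      have h' : γ2 * (a / γ2) = a := by field_simp
      have haγ : a ≤ γ2 * Real.log n := by
        have := mul_le_mul_of_nonneg_left hlog hγ2pos.le
        linarith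
      rw [hgn, div_le_div_iff₀ (by linarith) (by norm_num)]
      linarith
    have hdiff : 0 ≤ γ2 - gn n := by linarith
    -- pointwise bound
    have hpt : ∀ ω, ENNReal.ofReal (Real.exp (a * (Z n ω) ^ 2)) ≤
        ENNReal.ofReal (Real.exp (a * d)) + ∑ j ∈ Finset.Icc 1 n, g n (Y j ω) := by
      intro ω
      obtain ⟨j0, hj0mem, hj0⟩ := hMattain n (by omega) ω
      have hkey : a * (Z n ω) ^ 2 = gn n * (Y j0 ω) ^ 2 := by
        rw [hZ' n ω, hj0, mul_pow, inv_pow, hcsq n hn2, hgn]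
        ring
      by_cases hcase : 2 * d * Real.log n ≤ (Y j0 ω) ^ 2
      · have hterm : g n (Y j0 ω) = ENNReal.ofReal (Real.exp (gn n * (Y j0 ω) ^ 2)) :=
          if_pos hcase
        calc ENNReal.ofReal (Real.exp (a * (Z n ω) ^ 2)) = g n (Y j0 ω) := by
              rw [hkey, hterm]
          _ ≤ ∑ j ∈ Finset.Icc 1 n, g n (Y j ω) :=
              Finset.single_le_sum (f := fun j => g n (Y j ω)) (fun j _ => zero_le) hj0mem
          _ ≤ _ := le_add_self
      · push_neg at hcase
        have hle2 : gn n * (Y j0 ω) ^ 2 ≤ a * d := by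
          have h1 : gn n * (Y j0 ω) ^ 2 ≤ gn n * (2 * d * Real.log n) :=
            mul_le_mul_of_nonneg_left hcase.le hgnpos.le
          have h2 : gn n * (2 * d * Real.log n) = a * d := by
            rw [hgn]
            field_simp
          linarith
        calc ENNReal.ofReal (Real.exp (a * (Z n ω) ^ 2))
            ≤ ENNReal.ofReal (Real.exp (a * d)) := by
              rw [hkey]
              exact ENNReal.ofReal_le_ofReal (Real.exp_le_exp.mpr hle2)
          _ ≤ _ := le_self_add
    -- integrate the pointwise bound
    have hint : (∫⁻ ω, ENNReal.ofReal (Real.exp (a * (Z n ω) ^ 2)) ∂Pr) ≤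
        ENNReal.ofReal (Real.exp (a * d)) + ∑ j ∈ Finset.Icc 1 n, ∫⁻ ω, g n (Y j ω) ∂Pr := by
      calc (∫⁻ ω, ENNReal.ofReal (Real.exp (a * (Z n ω) ^ 2)) ∂Pr)
          ≤ ∫⁻ ω, (ENNReal.ofReal (Real.exp (a * d)) + ∑ j ∈ Finset.Icc 1 n, g n (Y j ω)) ∂Pr :=
            lintegral_mono hpt
        _ = (∫⁻ _, ENNReal.ofReal (Real.exp (a * d)) ∂Pr) +
              ∫⁻ ω, ∑ j ∈ Finset.Icc 1 n, g n (Y j ω) ∂Pr :=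
            lintegral_add_left measurable_const _
        _ = ENNReal.ofReal (Real.exp (a * d)) +
              ∑ j ∈ Finset.Icc 1 n, ∫⁻ ω, g n (Y j ω) ∂Pr := by
            rw [lintegral_const, measure_univ, mul_one]
            congr 1
            exact lintegral_finset_sum (f := fun j ω => g n (Y j ω)) _
              (fun j _ => (hgm n).comp (hmeas j))
    have htr : ∀ j ∈ Finset.Icc 1 n, (∫⁻ ω, g n (Y j ω) ∂Pr) = ∫⁻ ω, g n (Y 1 ω) ∂Pr :=
      fun j hj => htrans (g n) (hgm n) j (Finset.mem_Icc.mp hj).1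
    have hI : (∫⁻ ω, g n (Y 1 ω) ∂Pr) ≤
        ENNReal.ofReal (Real.exp (-((γ2 - gn n) * (2 * d * Real.log n)))) * C γ2 := by
      have hptg : ∀ y : ℝ, g n y ≤
          ENNReal.ofReal (Real.exp (-((γ2 - gn n) * (2 * d * Real.log n)))) *
            ENNReal.ofReal (Real.exp (γ2 * y ^ 2)) := by
        intro y
        simp only [hg]
        split_ifs with hcase
        · rw [← ENNReal.ofReal_mul (by positivity), ← Real.exp_add]
          apply ENNReal.ofReal_le_ofReal
          apply Real.exp_le_exp.mpr
          have hh : (γ2 - gn n) * (2 * d * Real.log n) ≤ (γ2 - gn n) * y ^ 2 :=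
            mul_le_mul_of_nonneg_left hcase hdiff
          have hexpand : (γ2 - gn n) * y ^ 2 = γ2 * y ^ 2 - gn n * y ^ 2 := by ring
          linarith
        · exact zero_le
      calc (∫⁻ ω, g n (Y 1 ω) ∂Pr)
          ≤ ∫⁻ ω, ENNReal.ofReal (Real.exp (-((γ2 - gn n) * (2 * d * Real.log n)))) *
              ENNReal.ofReal (Real.exp (γ2 * (Y 1 ω) ^ 2)) ∂Pr :=
            lintegral_mono (fun ω => hptg (Y 1 ω))
        _ = ENNReal.ofReal (Real.exp (-((γ2 - gn n) * (2 * d * Real.log n)))) * C γ2 :=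
            lintegral_const_mul _ ((hgmeas γ2).comp (hmeas 1))
    have hsum : (∑ j ∈ Finset.Icc 1 n, ∫⁻ ω, g n (Y j ω) ∂Pr) ≤
        (n : ℝ≥0∞) *
          (ENNReal.ofReal (Real.exp (-((γ2 - gn n) * (2 * d * Real.log n)))) * C γ2) := by
      calc (∑ j ∈ Finset.Icc 1 n, ∫⁻ ω, g n (Y j ω) ∂Pr)
          = ∑ _j ∈ Finset.Icc 1 n, ∫⁻ ω, g n (Y 1 ω) ∂Pr := Finset.sum_congr rfl htr
        _ = (n : ℝ≥0∞) * ∫⁻ ω, g n (Y 1 ω) ∂Pr := by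
            rw [Finset.sum_const, Nat.card_Icc, nsmul_eq_mul]
            simp
        _ ≤ _ := mul_le_mul_right hI _
    have hfactor : (n : ℝ≥0∞) *
        ENNReal.ofReal (Real.exp (-((γ2 - gn n) * (2 * d * Real.log n)))) ≤ 1 := by
      have hninv : (n : ℝ)⁻¹ = Real.exp (-(Real.log n)) := by
        rw [Real.exp_neg, Real.exp_log hn0]
      have hexple : Real.exp (-((γ2 - gn n) * (2 * d * Real.log n))) ≤ (n : ℝ)⁻¹ := by
        rw [hninv]
        apply Real.exp_le_exp.mpr
        have hcoef : 1 ≤ (γ2 - gn n) * (2 * d) := by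
          have h1 : γ2 / 2 ≤ γ2 - gn n := by linarith
          nlinarith
        nlinarith [hlogn.le]
      calc (n : ℝ≥0∞) * ENNReal.ofReal (Real.exp (-((γ2 - gn n) * (2 * d * Real.log n))))
          ≤ (n : ℝ≥0∞) * ENNReal.ofReal ((n : ℝ)⁻¹) :=
            mul_le_mul_right (ENNReal.ofReal_le_ofReal hexple) _
        _ = ENNReal.ofReal ((n : ℝ) * (n : ℝ)⁻¹) := by
            rw [ENNReal.ofReal_mul (by positivity), ENNReal.ofReal_natCast]
        _ = 1 := by rw [mul_inv_cancel₀ hn0.ne', ENNReal.ofReal_one]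
    calc (∫⁻ ω, ENNReal.ofReal (Real.exp (a * (Z n ω) ^ 2)) ∂Pr)
        ≤ ENNReal.ofReal (Real.exp (a * d)) +
            ∑ j ∈ Finset.Icc 1 n, ∫⁻ ω, g n (Y j ω) ∂Pr := hint
      _ ≤ ENNReal.ofReal (Real.exp (a * d)) + (n : ℝ≥0∞) *
            (ENNReal.ofReal (Real.exp (-((γ2 - gn n) * (2 * d * Real.log n)))) * C γ2) :=
          add_le_add_right hsum _
      _ = ENNReal.ofReal (Real.exp (a * d)) + ((n : ℝ≥0∞) *
            ENNReal.ofReal (Real.exp (-((γ2 - gn n) * (2 * d * Real.log n))))) * C γ2 := by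
          ring
      _ ≤ ENNReal.ofReal (Real.exp (a * d)) + 1 * C γ2 :=
          add_le_add_right (mul_le_mul_left hfactor _) _
      _ = ENNReal.ofReal (Real.exp (a * d)) + C γ2 := by rw [one_mul]
  have hls : Filter.limsup
      (fun n => ∫⁻ ω, ENNReal.ofReal (Real.exp (a * (Z n ω) ^ 2)) ∂Pr) atTop ≤
      ENNReal.ofReal (Real.exp (a * d)) + C γ2 :=
    Filter.limsup_le_of_le (h := eventually_atTop.mpr ⟨N, key2⟩)
  exact lt_of_le_of_lt hls
    (ENNReal.add_lt_top.mpr ⟨ENNReal.ofReal_lt_top, hmom γ2 hγ2lt⟩)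
end

section
/- Let φ(t) = (2π)^{-1/2} e^{-t²/2} be the standard normal density and Φ its cumulative distribution function, and set b_n = √(2 ln(n ∨ 2)). Fix 0 ≤ r < 1/2 and 0 < s < √(1−r) − √r. Then the series ∑_{n≥1} ∫_ℝ Φ((s·b_n − √r·t)/√(1−r))^n · φ(t) dt converges. -/
open MeasureTheory Real

/-- The standard normal density `φ(t) = (2π)^{-1/2} e^{-t²/2}`. -/
noncomputable def stdNormalPDF (t : ℝ) : ℝ :=
  (Real.sqrt (2 * Real.pi))⁻¹ * Real.exp (-t ^ 2 / 2)

/-- The standard normal distribution function `Φ(z) = ∫_{-∞}^z φ(t) dt`. -/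
noncomputable def stdNormalCDF (z : ℝ) : ℝ :=
  ∫ t in Set.Iic z, stdNormalPDF t

/-- `b_n = √(2 ln (n ∨ 2))`. -/
noncomputable def bFun (t : ℝ) : ℝ := Real.sqrt (2 * Real.log (max t 2))


lemma stdNormalPDF_nonneg (t : ℝ) : 0 ≤ stdNormalPDF t :=
  mul_nonneg (inv_nonneg.2 (Real.sqrt_nonneg _)) (Real.exp_nonneg _)

lemma continuous_stdNormalPDF : Continuous stdNormalPDF := by
  unfold stdNormalPDF
  fun_prop

lemma stdNormalPDF_fun_eq :
    stdNormalPDF = fun t => (Real.sqrt (2 * Real.pi))⁻¹ * Real.exp (-(1/2) * t ^ 2) := by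
  funext t; rw [stdNormalPDF]; ring_nf

lemma integrable_stdNormalPDF : Integrable stdNormalPDF := by
  rw [stdNormalPDF_fun_eq]
  exact (integrable_exp_neg_mul_sq (by norm_num)).const_mul _

lemma integral_stdNormalPDF : ∫ t : ℝ, stdNormalPDF t = 1 := by
  rw [stdNormalPDF_fun_eq]
  rw [integral_const_mul, integral_gaussian]
  rw [show Real.pi / (1/2) = 2 * Real.pi by ring]
  exact inv_mul_cancel₀ (by positivity)

lemma stdNormalCDF_nonneg (z : ℝ) : 0 ≤ stdNormalCDF z :=
  setIntegral_nonneg measurableSet_Iic fun t _ => stdNormalPDF_nonneg t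

lemma stdNormalCDF_le_one (z : ℝ) : stdNormalCDF z ≤ 1 := by
  rw [← integral_stdNormalPDF]
  exact setIntegral_le_integral integrable_stdNormalPDF (ae_of_all _ stdNormalPDF_nonneg)

lemma stdNormalCDF_mono : Monotone stdNormalCDF := fun _ _ h =>
  setIntegral_mono_set integrable_stdNormalPDF.integrableOn
    (ae_of_all _ stdNormalPDF_nonneg) ((Set.Iic_subset_Iic.2 h).eventuallyLE)

lemma one_sub_stdNormalCDF (x : ℝ) :
    ∫ t in Set.Ioi x, stdNormalPDF t = 1 - stdNormalCDF x := by
  have h := intervalIntegral.integral_Iic_add_Ioi (b := x)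
    integrable_stdNormalPDF.integrableOn integrable_stdNormalPDF.integrableOn
  rw [integral_stdNormalPDF] at h
  rw [stdNormalCDF]; linarith

lemma stdNormalPDF_le_pdf {x t : ℝ} (h1 : t ^ 2 ≤ x ^ 2) :
    stdNormalPDF x ≤ stdNormalPDF t := by
  unfold stdNormalPDF
  exact mul_le_mul_of_nonneg_left (Real.exp_le_exp.2 (by linarith))
    (inv_nonneg.2 (Real.sqrt_nonneg _))

lemma tail_lower {x : ℝ} (hx : 0 ≤ x) :
    stdNormalPDF (x + 1) ≤ 1 - stdNormalCDF x := by
  rw [← one_sub_stdNormalCDF]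
  have h1 : stdNormalPDF (x + 1) = ∫ _ in Set.Ioc x (x + 1), stdNormalPDF (x + 1) := by
    rw [setIntegral_const, measureReal_def, Real.volume_Ioc, show x + 1 - x = 1 by ring, ENNReal.toReal_ofReal
      zero_le_one, one_smul]
  rw [h1]
  have h2 : ∫ _ in Set.Ioc x (x + 1), stdNormalPDF (x + 1)
      ≤ ∫ t in Set.Ioc x (x + 1), stdNormalPDF t := by
    refine setIntegral_mono_on (integrableOn_const measure_Ioc_lt_top.ne)
      integrable_stdNormalPDF.integrableOn measurableSet_Ioc fun t ht => ?_
    exact stdNormalPDF_le_pdf (by nlinarith [ht.1, ht.2])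
  refine h2.trans (setIntegral_mono_set integrable_stdNormalPDF.integrableOn
    (ae_of_all _ stdNormalPDF_nonneg) (Set.Ioc_subset_Ioi_self.eventuallyLE))

lemma chernoff {x : ℝ} (hx : 0 < x) : stdNormalCDF (-x) ≤ Real.exp (-x ^ 2 / 2) := by
  have hint : Integrable (fun t => Real.exp (-x ^ 2 / 2) * stdNormalPDF (t + x)) :=
    (integrable_stdNormalPDF.comp_add_right x).const_mul _
  have h1 : stdNormalCDF (-x)
      ≤ ∫ t in Set.Iic (-x), Real.exp (-x ^ 2 / 2) * stdNormalPDF (t + x) := by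
    refine setIntegral_mono_on integrable_stdNormalPDF.integrableOn hint.integrableOn
      measurableSet_Iic fun t ht => ?_
    simp only [Set.mem_Iic] at ht
    unfold stdNormalPDF
    rw [mul_comm (Real.exp (-x ^ 2 / 2)), mul_assoc, ← Real.exp_add]
    refine mul_le_mul_of_nonneg_left (Real.exp_le_exp.2 ?_)
      (inv_nonneg.2 (Real.sqrt_nonneg _))
    nlinarith [mul_nonneg hx.le (neg_nonneg.2 (by linarith : t + x ≤ 0))]
  refine h1.trans ?_
  have h2 : ∫ t in Set.Iic (-x), Real.exp (-x ^ 2 / 2) * stdNormalPDF (t + x)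
      ≤ ∫ t : ℝ, Real.exp (-x ^ 2 / 2) * stdNormalPDF (t + x) :=
    setIntegral_le_integral hint (ae_of_all _ fun t =>
      mul_nonneg (Real.exp_nonneg _) (stdNormalPDF_nonneg _))
  refine h2.trans ?_
  rw [integral_const_mul, integral_add_right_eq_self stdNormalPDF x, integral_stdNormalPDF,
    mul_one]

lemma bFun_pos (n : ℕ) : 0 < bFun n := by
  rw [bFun]
  have h2 : (1:ℝ) < max (n:ℝ) 2 := lt_max_of_lt_right one_lt_two
  have := Real.log_pos h2
  positivity

lemma bFun_nat_eq {n : ℕ} (hn : 2 ≤ n) : bFun n = Real.sqrt (2 * Real.log n) := by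
  rw [bFun, max_eq_left (by exact_mod_cast hn)]

lemma bFun_sq {n : ℕ} (hn : 2 ≤ n) : bFun n ^ 2 = 2 * Real.log n := by
  rw [bFun_nat_eq hn, Real.sq_sqrt]
  have h1 : (1:ℝ) < n := by exact_mod_cast lt_of_lt_of_le one_lt_two hn
  have := Real.log_pos h1
  positivity

/-- For `0 ≤ r < 1/2` and `0 < s < √(1-r) - √r`, the series
`∑_n ∫ Φ((s b_n - √r t)/√(1-r))ⁿ φ(t) dt` converges. -/
theorem summable_integral_gaussian_max_series
    (r s : ℝ) (hr0 : 0 ≤ r) (hr : r < 1 / 2)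
    (hs0 : 0 < s) (hs : s < Real.sqrt (1 - r) - Real.sqrt r) :
    Summable (fun n : ℕ =>
      ∫ t : ℝ,
        (stdNormalCDF ((s * bFun n - Real.sqrt r * t) / Real.sqrt (1 - r))) ^ n *
          stdNormalPDF t) := by
  have hr1 : (0:ℝ) < 1 - r := by linarith
  have hsq1 : 0 < Real.sqrt (1 - r) := Real.sqrt_pos.2 hr1
  have hsqr0 : 0 ≤ Real.sqrt r := Real.sqrt_nonneg r
  obtain ⟨a, ha1, haD⟩ : ∃ a : ℝ, 1 < a ∧ a * Real.sqrt r < Real.sqrt (1 - r) - s := by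
    rcases eq_or_lt_of_le hr0 with h0 | h0
    · refine ⟨2, one_lt_two, ?_⟩
      rw [← h0, Real.sqrt_zero] at hs ⊢
      linarith
    · have hsr : 0 < Real.sqrt r := Real.sqrt_pos.2 h0
      refine ⟨(Real.sqrt (1 - r) - s + Real.sqrt r) / (2 * Real.sqrt r), ?_, ?_⟩
      · rw [lt_div_iff₀ (by positivity)]
        linarith
      · rw [div_mul_eq_mul_div, div_lt_iff₀ (by positivity)]
        nlinarith
  have ha0 : 0 < a := lt_trans one_pos ha1
  set c := (s + a * Real.sqrt r) / Real.sqrt (1 - r) with hc_def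
  have hc0 : 0 < c := div_pos (by positivity) hsq1
  have hc1 : c < 1 := by
    rw [hc_def, div_lt_one hsq1]
    linarith
  -- the dominating sequence
  set F := fun n : ℕ => stdNormalCDF (c * bFun n) ^ n + stdNormalCDF (-(a * bFun n)) with hF
  -- per-n integral bound
  have hf_meas : ∀ n : ℕ, Measurable fun t : ℝ =>
      (stdNormalCDF ((s * bFun n - Real.sqrt r * t) / Real.sqrt (1 - r))) ^ n *
        stdNormalPDF t := by
    intro n
    refine Measurable.mul ?_ continuous_stdNormalPDF.measurable
    exact (stdNormalCDF_mono.measurable.comp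
      ((measurable_const.sub (measurable_id.const_mul _)).div_const _)).pow_const n
  have hf_nonneg : ∀ (n : ℕ) (t : ℝ), 0 ≤
      (stdNormalCDF ((s * bFun n - Real.sqrt r * t) / Real.sqrt (1 - r))) ^ n *
        stdNormalPDF t := fun n t =>
    mul_nonneg (pow_nonneg (stdNormalCDF_nonneg _) n) (stdNormalPDF_nonneg t)
  have hf_le_pdf : ∀ (n : ℕ) (t : ℝ),
      (stdNormalCDF ((s * bFun n - Real.sqrt r * t) / Real.sqrt (1 - r))) ^ n *
        stdNormalPDF t ≤ stdNormalPDF t := fun n t =>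
    mul_le_of_le_one_left (stdNormalPDF_nonneg t)
      (pow_le_one₀ (stdNormalCDF_nonneg _) (stdNormalCDF_le_one _))
  have hf_int : ∀ n : ℕ, Integrable fun t : ℝ =>
      (stdNormalCDF ((s * bFun n - Real.sqrt r * t) / Real.sqrt (1 - r))) ^ n *
        stdNormalPDF t := by
    intro n
    refine Integrable.mono' integrable_stdNormalPDF (hf_meas n).aestronglyMeasurable
      (ae_of_all _ fun t => ?_)
    rw [Real.norm_of_nonneg (hf_nonneg n t)]
    exact hf_le_pdf n t
  have hF_bound : ∀ n : ℕ,
      (∫ t : ℝ,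
        (stdNormalCDF ((s * bFun n - Real.sqrt r * t) / Real.sqrt (1 - r))) ^ n *
          stdNormalPDF t) ≤ F n := by
    intro n
    set A := -(a * bFun n) with hA
    have hsplit := intervalIntegral.integral_Iic_add_Ioi (b := A)
      (hf_int n).integrableOn (hf_int n).integrableOn
    rw [← hsplit, hF]
    have hb1 : (∫ t in Set.Iic A,
        (stdNormalCDF ((s * bFun n - Real.sqrt r * t) / Real.sqrt (1 - r))) ^ n *
          stdNormalPDF t) ≤ stdNormalCDF (-(a * bFun n)) := by
      rw [stdNormalCDF, ← hA]
      exact setIntegral_mono_on (hf_int n).integrableOn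
        integrable_stdNormalPDF.integrableOn measurableSet_Iic fun t _ => hf_le_pdf n t
    have hb2 : (∫ t in Set.Ioi A,
        (stdNormalCDF ((s * bFun n - Real.sqrt r * t) / Real.sqrt (1 - r))) ^ n *
          stdNormalPDF t) ≤ stdNormalCDF (c * bFun n) ^ n := by
      have hpt : ∀ t ∈ Set.Ioi A,
          (stdNormalCDF ((s * bFun n - Real.sqrt r * t) / Real.sqrt (1 - r))) ^ n *
            stdNormalPDF t ≤ stdNormalCDF (c * bFun n) ^ n * stdNormalPDF t := by
        intro t ht
        simp only [Set.mem_Ioi, hA] at ht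
        have hu : (s * bFun n - Real.sqrt r * t) / Real.sqrt (1 - r) ≤ c * bFun n := by
          have h1 : Real.sqrt r * (-(a * bFun n)) ≤ Real.sqrt r * t :=
            mul_le_mul_of_nonneg_left ht.le hsqr0
          have h2 : s * bFun n - Real.sqrt r * t ≤ (s + a * Real.sqrt r) * bFun n := by
            nlinarith
          calc (s * bFun n - Real.sqrt r * t) / Real.sqrt (1 - r)
              ≤ ((s + a * Real.sqrt r) * bFun n) / Real.sqrt (1 - r) := by gcongr
            _ = c * bFun n := by rw [hc_def]; ring
        exact mul_le_mul_of_nonneg_right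
          (pow_le_pow_left₀ (stdNormalCDF_nonneg _) (stdNormalCDF_mono hu) n)
          (stdNormalPDF_nonneg t)
      have hstep : (∫ t in Set.Ioi A,
          (stdNormalCDF ((s * bFun n - Real.sqrt r * t) / Real.sqrt (1 - r))) ^ n *
            stdNormalPDF t) ≤ ∫ t in Set.Ioi A, stdNormalCDF (c * bFun n) ^ n * stdNormalPDF t :=
        setIntegral_mono_on (hf_int n).integrableOn
          (integrable_stdNormalPDF.const_mul _).integrableOn measurableSet_Ioi hpt
      refine hstep.trans ?_
      rw [integral_const_mul]
      have h3 : (∫ t in Set.Ioi A, stdNormalPDF t) ≤ 1 := by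
        rw [← integral_stdNormalPDF]
        exact setIntegral_le_integral integrable_stdNormalPDF (ae_of_all _ stdNormalPDF_nonneg)
      calc stdNormalCDF (c * bFun n) ^ n * ∫ t in Set.Ioi A, stdNormalPDF t
          ≤ stdNormalCDF (c * bFun n) ^ n * 1 :=
            mul_le_mul_of_nonneg_left h3 (pow_nonneg (stdNormalCDF_nonneg _) n)
        _ = stdNormalCDF (c * bFun n) ^ n := mul_one _
    linarith
  -- summability of the two pieces
  have hS1 : Summable (fun n : ℕ => stdNormalCDF (-(a * bFun n))) := by
    have hsum : Summable (fun n : ℕ => (n:ℝ) ^ (-(a^2))) :=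
      Real.summable_nat_rpow.2 (by nlinarith)
    refine summable_of_isBigO_nat hsum ?_
    rw [Asymptotics.isBigO_iff]
    refine ⟨1, ?_⟩
    filter_upwards [Filter.eventually_ge_atTop 2] with n hn
    have hn2 : (2:ℝ) ≤ (n:ℝ) := by exact_mod_cast hn
    have hn0 : (0:ℝ) < n := by linarith
    rw [Real.norm_of_nonneg (stdNormalCDF_nonneg _),
      Real.norm_of_nonneg (Real.rpow_nonneg hn0.le _), one_mul]
    have hab : 0 < a * bFun n := mul_pos ha0 (bFun_pos n)
    refine (chernoff hab).trans ?_
    rw [Real.rpow_def_of_pos hn0]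
    apply le_of_eq
    congr 1
    rw [mul_pow, bFun_sq hn]
    ring
  have hS2 : Summable (fun n : ℕ => stdNormalCDF (c * bFun n) ^ n) := by
    set δ := (1 - c^2)/2 with hδ
    have hδ0 : 0 < δ := by nlinarith
    set K := (Real.sqrt (2*Real.pi))⁻¹ * Real.exp (-(1/2):ℝ) with hK
    have hK0 : 0 < K := by positivity
    have E1 : ∀ᶠ n : ℕ in Filter.atTop, c * bFun n ≤ δ * Real.log n := by
      have hlog : Filter.Tendsto (fun n : ℕ => Real.log n) Filter.atTop Filter.atTop :=
        Real.tendsto_log_atTop.comp tendsto_natCast_atTop_atTop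
      filter_upwards [hlog.eventually_ge_atTop (2 * c^2/δ^2), Filter.eventually_ge_atTop 2]
        with n h1 hn
      have hL0 : (0:ℝ) ≤ Real.log n := le_trans (by positivity) h1
      rw [bFun_nat_eq hn]
      have h2 : Real.sqrt (2 * Real.log n) ≤ (δ/c) * Real.log n := by
        rw [show (δ/c) * Real.log n = Real.sqrt (((δ/c) * Real.log n)^2) from
          (Real.sqrt_sq (by positivity)).symm]
        apply Real.sqrt_le_sqrt
        rw [mul_pow, div_pow, div_mul_eq_mul_div, le_div_iff₀ (by positivity)]
        have h1' : 2 * c^2 ≤ δ^2 * Real.log n := by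
          rw [div_le_iff₀ (by positivity)] at h1
          linarith
        nlinarith
      calc c * Real.sqrt (2 * Real.log n) ≤ c * ((δ/c) * Real.log n) :=
          mul_le_mul_of_nonneg_left h2 hc0.le
        _ = δ * Real.log n := by field_simp
    have E2 : ∀ᶠ n : ℕ in Filter.atTop, 2 * Real.log n ≤ K * (n:ℝ) ^ δ := by
      have ht : Filter.Tendsto (fun n : ℕ => (n:ℝ) ^ (δ/2)) Filter.atTop Filter.atTop :=
        (tendsto_rpow_atTop (by positivity)).comp tendsto_natCast_atTop_atTop
      filter_upwards [ht.eventually_ge_atTop (4/(δ*K)), Filter.eventually_ge_atTop 1]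
        with n h1 hn
      have hn0 : (0:ℝ) < n := by exact_mod_cast Nat.lt_of_lt_of_le Nat.zero_lt_one hn
      have hXpos : (0:ℝ) < (n:ℝ) ^ (δ/2) := Real.rpow_pos_of_pos hn0 _
      have hlog : Real.log n ≤ (2/δ) * (n:ℝ)^(δ/2) := by
        have h3 : Real.log ((n:ℝ)^(δ/2)) = (δ/2) * Real.log n := Real.log_rpow hn0 _
        have h4 := Real.log_le_sub_one_of_pos hXpos
        rw [h3] at h4
        rw [div_mul_eq_mul_div, le_div_iff₀ hδ0]
        nlinarith
      have hsq : (n:ℝ)^δ = (n:ℝ)^(δ/2) * (n:ℝ)^(δ/2) := by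
        rw [← Real.rpow_add hn0]
        norm_num
      rw [hsq]
      have h6 : (4/δ) * ((n:ℝ)^(δ/2)) ≤ K * ((n:ℝ)^(δ/2) * (n:ℝ)^(δ/2)) := by
        have h7 := mul_le_mul_of_nonneg_left h1 (mul_pos hK0 hXpos).le
        calc (4/δ) * ((n:ℝ)^(δ/2)) = (K * (n:ℝ)^(δ/2)) * (4/(δ*K)) := by
              field_simp
          _ ≤ (K * (n:ℝ)^(δ/2)) * (n:ℝ)^(δ/2) := h7
          _ = K * ((n:ℝ)^(δ/2) * (n:ℝ)^(δ/2)) := by ring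
      have h8 : (4/δ) * ((n:ℝ)^(δ/2)) = 2 * ((2/δ) * ((n:ℝ)^(δ/2))) := by ring
      linarith
    have hsum : Summable (fun n : ℕ => (n:ℝ) ^ (-2 : ℝ)) :=
      Real.summable_nat_rpow.2 (by norm_num)
    refine summable_of_isBigO_nat hsum ?_
    rw [Asymptotics.isBigO_iff]
    refine ⟨1, ?_⟩
    filter_upwards [E1, E2, Filter.eventually_ge_atTop 2] with n h1 h2 hn
    have hn2 : (2:ℝ) ≤ (n:ℝ) := by exact_mod_cast hn
    have hn0 : (0:ℝ) < n := by linarith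
    have hcb0 : 0 ≤ c * bFun n := mul_nonneg hc0.le (bFun_pos n).le
    rw [Real.norm_of_nonneg (pow_nonneg (stdNormalCDF_nonneg _) n),
      Real.norm_of_nonneg (Real.rpow_nonneg hn0.le _), one_mul]
    -- step 1: Φ(cb)^n ≤ exp(-(n * φ(cb+1)))
    have step1 : stdNormalCDF (c * bFun n) ≤ Real.exp (-(stdNormalPDF (c * bFun n + 1))) := by
      have := tail_lower hcb0
      have := Real.add_one_le_exp (-(stdNormalPDF (c * bFun n + 1)))
      linarith
    have step2 : stdNormalCDF (c * bFun n) ^ n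
        ≤ Real.exp (-((n:ℝ) * stdNormalPDF (c * bFun n + 1))) := by
      calc stdNormalCDF (c * bFun n) ^ n
          ≤ Real.exp (-(stdNormalPDF (c * bFun n + 1))) ^ n :=
            pow_le_pow_left₀ (stdNormalCDF_nonneg _) step1 n
        _ = Real.exp (-((n:ℝ) * stdNormalPDF (c * bFun n + 1))) := by
            rw [← Real.exp_nat_mul]
            ring_nf
    -- value of n * φ(cb+1)
    have hval : (n:ℝ) * stdNormalPDF (c * bFun n + 1)
        = K * Real.exp ((1 - c^2) * Real.log n - c * bFun n) := by
      obtain ⟨L, hL⟩ : ∃ L, Real.log (n:ℝ) = L := ⟨_, rfl⟩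
      obtain ⟨B, hB, hB2⟩ : ∃ B, bFun (n:ℝ) = B ∧ B ^ 2 = 2 * L :=
        ⟨_, rfl, by rw [← hL]; exact bFun_sq hn⟩
      have hnL : (n:ℝ) = Real.exp L := by rw [← hL, Real.exp_log hn0]
      rw [hL, hB, hnL, stdNormalPDF, hK]
      calc Real.exp L * ((Real.sqrt (2*Real.pi))⁻¹ * Real.exp (-(c * B + 1)^2/2))
          = (Real.sqrt (2*Real.pi))⁻¹ * Real.exp (-(c * B + 1)^2/2 + L) := by
            rw [Real.exp_add]; ring
        _ = (Real.sqrt (2*Real.pi))⁻¹ * Real.exp (-(1/2) + ((1 - c^2) * L - c * B)) := by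
            have harg : -(c * B + 1)^2/2 + L = -(1/2) + ((1 - c^2) * L - c * B) := by
              linear_combination (-(c^2)/2) * hB2
            rw [harg]
        _ = (Real.sqrt (2*Real.pi))⁻¹ * Real.exp (-(1/2):ℝ)
            * Real.exp ((1 - c^2) * L - c * B) := by
            rw [mul_assoc, ← Real.exp_add]
    have step3 : K * Real.exp (δ * Real.log n) ≤ (n:ℝ) * stdNormalPDF (c * bFun n + 1) := by
      rw [hval]
      refine mul_le_mul_of_nonneg_left (Real.exp_le_exp.2 ?_) hK0.le
      have : (1 - c^2) = 2 * δ := by rw [hδ]; ring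
      rw [this]
      linarith
    have step4 : K * Real.exp (δ * Real.log n) = K * (n:ℝ) ^ δ := by
      rw [Real.rpow_def_of_pos hn0, mul_comm δ]
    have step5 : 2 * Real.log n ≤ (n:ℝ) * stdNormalPDF (c * bFun n + 1) := by
      rw [step4] at step3
      linarith
    calc stdNormalCDF (c * bFun n) ^ n
        ≤ Real.exp (-((n:ℝ) * stdNormalPDF (c * bFun n + 1))) := step2
      _ ≤ Real.exp (-(2 * Real.log n)) := Real.exp_le_exp.2 (by linarith)
      _ = (n:ℝ) ^ (-2 : ℝ) := by
          rw [Real.rpow_def_of_pos hn0]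
          ring_nf
  -- conclude
  refine Summable.of_nonneg_of_le (fun n => integral_nonneg (hf_nonneg n)) hF_bound ?_
  exact hS2.add hS1
end

section
/- Let B be a separable Banach space. For any two nonempty compact convex subsets A and C of B, the Hausdorff distance between them equals the uniform distance between their support functions over the unit sphere of the dual: ρ_B(A, C) = sup_{θ ∈ B*, ‖θ‖=1} |M_A(θ) − M_C(θ)|. Moreover, a nonempty compact convex set A is recovered from its support function: A = ⋂_{θ ∈ B*, ‖θ‖=1} {u ∈ B : ⟨u, θ⟩ ≤ M_A(θ)}. -/
open Metric

section Aux

variable {B : Type*} [NormedAddCommGroup B] [NormedSpace ℝ B]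

private lemma normalize_norm_one (f : B →L[ℝ] ℝ) (hf : f ≠ 0) :
    ‖(‖f‖⁻¹ • f : B →L[ℝ] ℝ)‖ = 1 := by
  have hn : (0:ℝ) < ‖f‖ :=
    lt_of_le_of_ne (norm_nonneg f) fun h => hf (ContinuousLinearMap.opNorm_zero_iff f |>.mp h.symm)
  have h2 := norm_smul (‖f‖⁻¹) f
  rw [h2, norm_inv, norm_norm, inv_mul_cancel₀ hn.ne']

/-- Key separation step: if the difference of support functions is bounded by `r` for all
unit functionals, then every point of `A` is within `r` of `C`. -/
private lemma infDist_le_of_support (A C : Set B) (hAc : IsCompact A)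
    (hCne : C.Nonempty) (hCconv : Convex ℝ C) {r : ℝ} (hr : 0 ≤ r)
    (h : ∀ θ : B →L[ℝ] ℝ, ‖θ‖ = 1 →
      sSup ((fun x => θ x) '' A) - sSup ((fun x => θ x) '' C) ≤ r) :
    ∀ a ∈ A, infDist a C ≤ r := by
  intro a ha
  by_contra hlt
  push_neg at hlt
  -- `a` is not in the `r`-cthickening of `C`
  have hnot : a ∉ cthickening r C := by
    rw [mem_cthickening_iff]
    intro hle
    have h1 : infDist a C ≤ r := by
      have := ENNReal.toReal_mono (by simp) hle
      rwa [ENNReal.toReal_ofReal hr] at this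
    exact absurd h1 (not_le.mpr hlt)
  obtain ⟨f, u, hfu, hua⟩ :=
    geometric_hahn_banach_closed_point (hCconv.cthickening r) isClosed_cthickening hnot
  obtain ⟨c₀, hc₀⟩ := id hCne
  have hfc₀ : f c₀ < u := hfu c₀ (self_subset_cthickening C hc₀)
  have hfne : f ≠ 0 := by
    intro h0
    rw [h0] at hfc₀ hua
    simp at hfc₀ hua
    linarith
  have hn : (0:ℝ) < ‖f‖ :=
    lt_of_le_of_ne (norm_nonneg f) fun h => hfne (ContinuousLinearMap.opNorm_zero_iff f |>.mp h.symm)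
  set θ : B →L[ℝ] ℝ := ‖f‖⁻¹ • f with hθdef
  have hθ1 : ‖θ‖ = 1 := normalize_norm_one f hfne
  have hθapp : ∀ x, θ x = ‖f‖⁻¹ * f x := fun x => rfl
  -- every point of the cthickening has `θ`-value at most `‖f‖⁻¹ * u`
  have hth : ∀ y ∈ cthickening r C, θ y ≤ ‖f‖⁻¹ * u := by
    intro y hy
    rw [hθapp]
    exact (mul_le_mul_of_nonneg_left (hfu y hy).le (inv_nonneg.mpr hn.le))
  -- support of C satisfies: θ c + r ≤ ‖f‖⁻¹ * u
  have key1 : ∀ c ∈ C, θ c + r ≤ ‖f‖⁻¹ * u := by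
    intro c hc
    have hcth : θ c < ‖f‖⁻¹ * u := by
      rw [hθapp]
      exact mul_lt_mul_of_pos_left (hfu c (self_subset_cthickening C hc)) (inv_pos.mpr hn)
    rcases hr.eq_or_lt with hr0 | hr0
    · rw [← hr0]; linarith
    · by_contra hcon
      push_neg at hcon
      set t : ℝ := (‖f‖⁻¹ * u - θ c) / r with ht
      have ht1 : t < 1 := by
        rw [ht, div_lt_one hr0]; linarith
      obtain ⟨x, hx1, hx2⟩ := θ.exists_lt_apply_of_lt_opNorm (hθ1 ▸ ht1)
      have : ∃ v : B, ‖v‖ ≤ 1 ∧ t < θ v := by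
        rcases lt_abs.mp (by rwa [Real.norm_eq_abs] at hx2) with h' | h'
        · exact ⟨x, hx1.le, h'⟩
        · exact ⟨-x, by simpa using hx1.le, by simpa using h'⟩
      obtain ⟨v, hv1, hv2⟩ := this
      have hmem : c + r • v ∈ cthickening r C := by
        rw [mem_cthickening_iff]
        refine le_trans (EMetric.infEdist_le_edist_of_mem hc) ?_
        rw [edist_dist]
        apply ENNReal.ofReal_le_ofReal
        rw [dist_eq_norm, add_sub_cancel_left, norm_smul, Real.norm_eq_abs,
          abs_of_nonneg hr]
        calc r * ‖v‖ ≤ r * 1 := by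
              exact mul_le_mul_of_nonneg_left hv1 hr
          _ = r := mul_one r
      have hub := hth _ hmem
      rw [map_add, map_smul, smul_eq_mul] at hub
      have : t * r < θ v * r := mul_lt_mul_of_pos_right hv2 hr0
      rw [ht, div_mul_cancel₀ _ hr0.ne'] at this
      linarith
  -- conclude
  have hbA : BddAbove ((fun x => θ x) '' A) := (hAc.image θ.continuous).bddAbove
  have hA1 : θ a ≤ sSup ((fun x => θ x) '' A) := le_csSup hbA ⟨a, ha, rfl⟩
  have hA2 : ‖f‖⁻¹ * u < θ a := by
    rw [hθapp]
    exact mul_lt_mul_of_pos_left hua (inv_pos.mpr hn)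
  have hC1 : sSup ((fun x => θ x) '' C) ≤ ‖f‖⁻¹ * u - r := by
    apply csSup_le (Set.Nonempty.image _ hCne)
    rintro y ⟨c, hc, rfl⟩
    linarith [key1 c hc]
  have := h θ hθ1
  linarith

/-- Upper bound: support-function difference is bounded by the Hausdorff distance. -/
private lemma support_sub_le (A C : Set B) (hAne : A.Nonempty) (hAc : IsCompact A)
    (hCne : C.Nonempty) (hCc : IsCompact C)
    (θ : B →L[ℝ] ℝ) (hθ : ‖θ‖ = 1) :
    sSup ((fun x => θ x) '' A) - sSup ((fun x => θ x) '' C) ≤ hausdorffDist A C := by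
  have hfin : EMetric.hausdorffEdist A C ≠ ⊤ :=
    hausdorffEdist_ne_top_of_nonempty_of_bounded hAne hCne hAc.isBounded hCc.isBounded
  have hbC : BddAbove ((fun x => θ x) '' C) := (hCc.image θ.continuous).bddAbove
  rw [sub_le_iff_le_add]
  apply csSup_le (Set.Nonempty.image _ hAne)
  rintro y ⟨a, ha, rfl⟩
  obtain ⟨c, hc, hdc⟩ := hCc.exists_infDist_eq_dist hCne a
  have h1 : θ a - θ c ≤ dist a c := by
    have := θ.le_opNorm (a - c)
    rw [hθ, one_mul, map_sub] at this
    calc θ a - θ c ≤ ‖θ a - θ c‖ := by rw [Real.norm_eq_abs]; exact le_abs_self _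
      _ = ‖θ (a - c)‖ := by rw [map_sub]
      _ ≤ ‖a - c‖ := by simpa using this
      _ = dist a c := (dist_eq_norm a c).symm
  have h2 : infDist a C ≤ hausdorffDist A C := infDist_le_hausdorffDist_of_mem ha hfin
  have h3 : θ c ≤ sSup ((fun x => θ x) '' C) := le_csSup hbC ⟨c, hc, rfl⟩
  linarith [hdc ▸ h2]

end Aux

/-- **Support functions.** In a (nontrivial) separable Banach space, the Hausdorff distance
between two nonempty compact convex sets equals the supremum, over the unit sphere of the
dual, of the absolute difference of their support functions; moreover every nonempty
compact convex set is recovered from its support function. -/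
theorem hausdorffDist_eq_sup_support_and_recovery
    {B : Type*} [NormedAddCommGroup B] [NormedSpace ℝ B] [CompleteSpace B]
    [TopologicalSpace.SeparableSpace B] [Nontrivial B]
    (A C : Set B) (hAne : A.Nonempty) (hAc : IsCompact A) (hAconv : Convex ℝ A)
    (hCne : C.Nonempty) (hCc : IsCompact C) (hCconv : Convex ℝ C) :
    hausdorffDist A C =
      sSup {d : ℝ | ∃ θ : B →L[ℝ] ℝ, ‖θ‖ = 1 ∧
        d = |sSup ((fun x => θ x) '' A) - sSup ((fun x => θ x) '' C)|} ∧
    A = ⋂ θ ∈ {θ : B →L[ℝ] ℝ | ‖θ‖ = 1},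
      {u : B | θ u ≤ sSup ((fun x => θ x) '' A)} := by
  set S : Set ℝ := {d : ℝ | ∃ θ : B →L[ℝ] ℝ, ‖θ‖ = 1 ∧
      d = |sSup ((fun x => θ x) '' A) - sSup ((fun x => θ x) '' C)|} with hS
  -- each element of S is at most the Hausdorff distance
  have hub : ∀ d ∈ S, d ≤ hausdorffDist A C := by
    rintro d ⟨θ, hθ, rfl⟩
    rw [abs_sub_le_iff]
    constructor
    · exact support_sub_le A C hAne hAc hCne hCc θ hθ
    · rw [hausdorffDist_comm]
      exact support_sub_le C A hCne hCc hAne hAc θ hθ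
  -- S is nonempty
  obtain ⟨x0, hx0⟩ := exists_ne (0 : B)
  obtain ⟨g, hg1, _⟩ := exists_dual_vector ℝ x0 (norm_ne_zero_iff.mpr hx0)
  have hSne : S.Nonempty := ⟨_, g, hg1, rfl⟩
  have hSbdd : BddAbove S := ⟨hausdorffDist A C, hub⟩
  have hSle : sSup S ≤ hausdorffDist A C := csSup_le hSne hub
  have hS0 : 0 ≤ sSup S := by
    obtain ⟨d, hd⟩ := hSne
    have : d ≤ sSup S := le_csSup hSbdd hd
    obtain ⟨θ, _, rfl⟩ := hd
    exact le_trans (abs_nonneg _) this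
  have hgeS : hausdorffDist A C ≤ sSup S := by
    apply hausdorffDist_le_of_infDist hS0
    · apply infDist_le_of_support A C hAc hCne hCconv hS0
      intro θ hθ
      exact le_trans (le_abs_self _) (le_csSup hSbdd ⟨θ, hθ, rfl⟩)
    · apply infDist_le_of_support C A hCc hAne hAconv hS0
      intro θ hθ
      refine le_trans (le_abs_self _) (le_trans (le_of_eq (abs_sub_comm _ _))
        (le_csSup hSbdd ⟨θ, hθ, rfl⟩))
  constructor
  · exact le_antisymm hgeS hSle
  · apply Set.Subset.antisymm
    · intro a ha
      rw [Set.mem_iInter₂]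
      intro θ hθ
      exact le_csSup (hAc.image θ.continuous).bddAbove ⟨a, ha, rfl⟩
    · intro u hu
      rw [Set.mem_iInter₂] at hu
      by_contra huA
      obtain ⟨f, s, hfs, hsu⟩ :=
        geometric_hahn_banach_closed_point hAconv hAc.isClosed huA
      obtain ⟨a0, ha0⟩ := id hAne
      have hfne : f ≠ 0 := by
        intro h0
        rw [h0] at hfs hsu
        have := hfs a0 ha0
        simp at this hsu
        linarith
      have hn : (0:ℝ) < ‖f‖ := lt_of_le_of_ne (norm_nonneg f)
        fun h => hfne (ContinuousLinearMap.opNorm_zero_iff f |>.mp h.symm)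
      set θ : B →L[ℝ] ℝ := ‖f‖⁻¹ • f with hθdef
      have hθ1 : ‖θ‖ = 1 := normalize_norm_one f hfne
      have h1 : sSup ((fun x => θ x) '' A) ≤ ‖f‖⁻¹ * s := by
        apply csSup_le (Set.Nonempty.image _ hAne)
        rintro y ⟨a, ha, rfl⟩
        show ‖f‖⁻¹ * f a ≤ ‖f‖⁻¹ * s
        exact mul_le_mul_of_nonneg_left (hfs a ha).le (inv_nonneg.mpr hn.le)
      have h2 : ‖f‖⁻¹ * s < θ u := by
        show ‖f‖⁻¹ * s < ‖f‖⁻¹ * f u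
        exact mul_lt_mul_of_pos_left hsu (inv_pos.mpr hn)
      have h3 := hu θ hθ1
      simp only [Set.mem_setOf_eq] at h3
      linarith
end
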